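/- arXiv:2502.20597 — 3 statements merged into one kernel-verified Lean document; each statement's English description precedes it below -/
import Mathlib

section
/- Let $F : U \to V$ be a functor between categories. Then the assignment $TF(X,\mu,(M_x)) = (X,\mu,(F(M_x)))$ on objects and $TF[(f,(\sigma_y))] = [(f,(F(\sigma_y)))]$ on morphisms is a well-defined functor $TU \to TV$, and $T$ so defined preserves composition of functors and identity functors strictly. -/
open CategoryTheory

universe w v u

/-- An object of the ultracompletion `TU`: a set `X`, an ultrafilter `μ` on `X`, and a
family of objects of `U` indexed by `X`. -/
structure TObj (U : Type u) [Category.{v} U] where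
  X : Type w
  μ : Ultrafilter X
  M : X → U

/-- A representative of a morphism `(X,μ,M) ⟶ (Y,ν,N)` in `TU`: a function `f : Y → X`
pushing `ν` forward to `μ` together with a family of morphisms `M (f y) ⟶ N y`.
(Since `Y' ∈ ν`, partially defined representatives on `Y' ⊆ Y` determine and are
determined by their germ, so we work with everywhere-defined representatives;
the germ relation `trel` below identifies representatives agreeing on a set in `ν`.) -/
structure TPre {U : Type u} [Category.{v} U] (A B : TObj.{w} U) where
  f : B.X → A.X
  hf : B.μ.map f = A.μ
  σ : ∀ y : B.X, A.M (f y) ⟶ B.M y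

/-- The germ equivalence relation: two representatives are identified when they agree
(both the function and the family of morphisms) on a set belonging to the ultrafilter. -/
def trel {U : Type u} [Category.{v} U] (A B : TObj.{w} U) (u v : TPre A B) : Prop :=
  ∃ D ∈ B.μ, ∀ y ∈ D, u.f y = v.f y ∧ HEq (u.σ y) (v.σ y)

/-- The identity representative. -/
def tid {U : Type u} [Category.{v} U] (A : TObj.{w} U) : TPre A A :=
  ⟨id, A.μ.map_id, fun y => 𝟙 (A.M y)⟩

/-- Composition of representatives: `(f,(σ)) ≫ (g,(τ)) = (f ∘ g, (σ_{g z} ≫ τ_z))`. -/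
def tcomp {U : Type u} [Category.{v} U] {A B C : TObj.{w} U}
    (u : TPre A B) (v : TPre B C) : TPre A C :=
  ⟨u.f ∘ v.f, by rw [← Ultrafilter.map_map, v.hf, u.hf], fun z => u.σ (v.f z) ≫ v.σ z⟩


/-- Action of the ultracompletion on objects, for a functor `F : U ⥤ V`:
`TF (X,μ,(M_x)) = (X,μ,(F M_x))`. -/
def TObjMap {U : Type u} {V : Type*} [Category.{v} U] [Category V]
    (F : U ⥤ V) (A : TObj.{w} U) : TObj.{w} V :=
  ⟨A.X, A.μ, F.obj ∘ A.M⟩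

/-- Action of the ultracompletion on morphism representatives:
`TF (f,(σ_y)) = (f,(F σ_y))`. -/
def TPreMap {U : Type u} {V : Type*} [Category.{v} U] [Category V]
    (F : U ⥤ V) {A B : TObj.{w} U} (u : TPre A B) :
    TPre (TObjMap F A) (TObjMap F B) :=
  ⟨u.f, u.hf, fun y => F.map (u.σ y)⟩

/-- `TF` is well defined on germ equivalence classes and functorial
(preserves identities and composition up to the germ relation, hence on the quotient
hom-sets), and `T` preserves identity functors and composition of functors strictly. -/
theorem ultracompletion_map_functorial {U : Type u} {V W : Type*}
    [Category.{v} U] [Category V] [Category W] (F : U ⥤ V) (G : V ⥤ W) :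
    (∀ (A B : TObj.{w} U) (u v : TPre A B), trel A B u v →
      trel (TObjMap F A) (TObjMap F B) (TPreMap F u) (TPreMap F v)) ∧
    (∀ A : TObj.{w} U, TPreMap F (tid A) = tid (TObjMap F A)) ∧
    (∀ (A B C : TObj.{w} U) (u : TPre A B) (v : TPre B C),
      TPreMap F (tcomp u v) = tcomp (TPreMap F u) (TPreMap F v)) ∧
    (∀ A : TObj.{w} U, TObjMap (𝟭 U) A = A) ∧
    (∀ (A B : TObj.{w} U) (u : TPre A B), TPreMap (𝟭 U) u = u) ∧
    (∀ A : TObj.{w} U, TObjMap (F ⋙ G) A = TObjMap G (TObjMap F A)) ∧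
    (∀ (A B : TObj.{w} U) (u : TPre A B),
      TPreMap (F ⋙ G) u = TPreMap G (TPreMap F u)) := by
  refine ⟨?_, ?_, ?_, ?_, ?_, ?_, ?_⟩
  · rintro A B u v ⟨D, hD, h⟩
    refine ⟨D, hD, fun y hy => ?_⟩
    obtain ⟨h1, h2⟩ := h y hy
    refine ⟨h1, ?_⟩
    have key : ∀ {x x' : A.X} (_ : x = x') (s : A.M x ⟶ B.M y)
        (t : A.M x' ⟶ B.M y), HEq s t → HEq (F.map s) (F.map t) := by
      rintro x _ rfl s t h
      rw [eq_of_heq h]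
    exact key h1 _ _ h2
  · intro A
    simp only [TPreMap, tid]
    congr 1
    funext y
    exact F.map_id _
  · intro A B C u v
    simp only [TPreMap, tcomp]
    congr 1
    funext z
    simp
    rfl
  · intro A
    rfl
  · intro A B u
    rfl
  · intro A
    rfl
  · intro A B u
    rfl
end

section
/- Let $S$ be a set, $\mu$ an ultrafilter on $S$, $(T_s)_{s\in S}$ a family of sets with ultrafilters $\omega_s$ on $T_s$, and $(M_{(s,t)})$ a family of nonempty sets indexed by $\coprod_{s\in S}T_s$. Then the natural map $a : \int_{\coprod_S T_s} M_{(s,t)} \, d\left(\int_S \iota_s\omega_s \, d\mu\right) \to \int_S \left(\int_{T_s} M_{(s,t)} \, d\omega_s \right) d\mu$, sending the class of a tuple $(q_{(s,t)})$ to the class of the tuple of classes $((q_{(s,t)})_t)_s$, is well-defined and bijective. -/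
/-- The integral `∫_S ν_s dμ` of a family of ultrafilters against an ultrafilter,
characterized by `B ∈ ∫_S ν_s dμ ↔ {s | B ∈ ν s} ∈ μ` (see `mem_UFint`). -/
def UFint {S T : Type*} (μ : Ultrafilter S) (ν : S → Ultrafilter T) : Ultrafilter T :=
  μ.bind ν

lemma mem_UFint {S T : Type*} {μ : Ultrafilter S} {ν : S → Ultrafilter T} {B : Set T} :
    B ∈ UFint μ ν ↔ {s : S | B ∈ ν s} ∈ μ :=
  Filter.mem_bind'

/-- The relation on `∏ x, M x` identifying tuples that agree on a set in `μ`. -/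
def UPrel {X : Type*} (μ : Ultrafilter X) (M : X → Type*)
    (p q : ∀ x, M x) : Prop :=
  {x : X | p x = q x} ∈ μ

/-- The set-theoretic ultraproduct `∫_X M_x dμ = (∏ x, M x)/∼`. -/
def UP {X : Type*} (μ : Ultrafilter X) (M : X → Type*) : Type _ :=
  Quot (UPrel μ M)

/-!
A tuple on `∐_S T_s` is the same thing as a family of fiber tuples `t ↦ q ⟨s, t⟩`, and by the
defining property of `∫_S ι_s ω_s dμ` two tuples agree on a set of that ultrafilter exactly when,
for `μ`-almost every `s`, their fiber tuples agree `ω_s`-almost everywhere, i.e. have the same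
class in `∫_{T_s} M dω_s`. So the map is well defined and injective; it is surjective because
every family of classes lifts to a family of representatives.
-/

lemma UPrel_equivalence {X : Type*} (μ : Ultrafilter X) (M : X → Type*) :
    Equivalence (UPrel μ M) where
  refl _ := Filter.univ_mem' fun _ => rfl
  symm h := by simpa only [UPrel, eq_comm] using h
  trans h₁ h₂ := Filter.mem_of_superset (Filter.inter_mem h₁ h₂) fun _ hx => hx.1.trans hx.2

lemma UP_mk_eq_mk_iff {X : Type*} {μ : Ultrafilter X} {M : X → Type*} {p q : ∀ x, M x} :
    (Quot.mk (UPrel μ M) p : UP μ M) = Quot.mk _ q ↔ UPrel μ M p q :=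
  ⟨fun h => (UPrel_equivalence μ M).eqvGen_iff.mp (Quot.eqvGen_exact h), Quot.sound⟩

section Sigma

variable {S : Type*} {T : S → Type*} (μ : Ultrafilter S) (ω : ∀ s, Ultrafilter (T s))
  {M : (Σ s, T s) → Type*}

def fiberClasses (q : ∀ p, M p) (s : S) : UP (ω s) (fun t => M ⟨s, t⟩) :=
  Quot.mk _ fun t => q ⟨s, t⟩

lemma UPrel_UFint_iff {q q' : ∀ p, M p} :
    UPrel (UFint μ fun s => (ω s).map (Sigma.mk s)) M q q' ↔
      UPrel μ _ (fiberClasses ω q) (fiberClasses ω q') := by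
  rw [UPrel, mem_UFint, UPrel]
  exact Iff.of_eq (congrArg (· ∈ μ) (Set.ext fun _ => UP_mk_eq_mk_iff.symm))

lemma fiberClasses_surjective :
    Function.Surjective (fiberClasses ω : (∀ p, M p) → ∀ s, UP (ω s) fun t => M ⟨s, t⟩) := by
  intro r
  choose q hq using fun s => Quot.exists_rep (r s)
  exact ⟨fun p => q p.1 p.2, funext hq⟩

end Sigma

theorem set_is_pseudoalgebra_general {S : Type*} {T : S → Type*}
    (μ : Ultrafilter S) (ω : ∀ s, Ultrafilter (T s))
    (M : (Σ s, T s) → Type*) :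
    ∃ a : UP (UFint μ (fun s => (ω s).map (Sigma.mk s))) M →
        UP μ (fun s => UP (ω s) (fun t => M ⟨s, t⟩)),
      (∀ q : ∀ p, M p,
        a (Quot.mk _ q) = Quot.mk _ (fun s => Quot.mk _ (fun t => q ⟨s, t⟩))) ∧
      Function.Bijective a := by
  refine ⟨Quot.lift (fun q => Quot.mk _ (fiberClasses ω q))
    (fun _ _ h => Quot.sound ((UPrel_UFint_iff μ ω).mp h)), fun _ => rfl, ?_, ?_⟩
  · rintro ⟨q⟩ ⟨q'⟩ h
    exact Quot.sound ((UPrel_UFint_iff μ ω).mpr (UP_mk_eq_mk_iff.mp h))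
  · rintro ⟨r⟩
    obtain ⟨q, rfl⟩ := fiberClasses_surjective ω r
    exact ⟨Quot.mk _ q, rfl⟩

/-- the natural map
`∫_{∐_S T_s} M_{(s,t)} d(∫_S ι_s ω_s dμ) → ∫_S (∫_{T_s} M_{(s,t)} dω_s) dμ`,
sending the class of `(q_{(s,t)})` to the class of the tuple of classes,
is well-defined and bijective. -/
theorem set_is_pseudoalgebra {S : Type*} {T : S → Type*}
    (μ : Ultrafilter S) (ω : ∀ s, Ultrafilter (T s))
    (M : (Σ s, T s) → Type*) (hne : ∀ p, Nonempty (M p)) :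
    ∃ a : UP (UFint μ (fun s => (ω s).map (Sigma.mk s))) M →
        UP μ (fun s => UP (ω s) (fun t => M ⟨s, t⟩)),
      (∀ q : ∀ p, M p,
        a (Quot.mk _ q) = Quot.mk _ (fun s => Quot.mk _ (fun t => q ⟨s, t⟩))) ∧
      Function.Bijective a :=
  set_is_pseudoalgebra_general μ ω M
end

section
/- Let $k > 0$ and let $(M_{(s,t)})$ be a family of nonempty complete metric spaces with diameter bounded by $k$, indexed by $\coprod_{s\in S}T_s$, where $\mu$ is an ultrafilter on $S$ and $\omega_s$ ultrafilters on $T_s$. Define the metric ultraproduct $\int_X A_x \, d\nu$ of such spaces as $\prod_x A_x/\sim$ where $(p_x)\sim(q_x)$ iff for every $\varepsilon > 0$ the set $\{x : d(p_x,q_x) < \varepsilon\} \in \nu$, with metric $d([p],[q]) = \lim_\nu d(p_x,q_x)$. Then the natural map $\int_{\coprod_S T_s} M_{(s,t)} \, d\left(\int_S \iota_s\omega_s \, d\mu\right) \to \int_S \left(\int_{T_s} M_{(s,t)} \, d\omega_s\right) d\mu$, sending the class of $(q_{(s,t)})$ to the class of the tuple of classes, is a well-defined isometric bijection. -/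
/-- `L` is the ultralimit along `ν` of the family of reals `a`. -/
def IsUlim {X : Type*} (ν : Ultrafilter X) (a : X → ℝ) (L : ℝ) : Prop :=
  ∀ ε > (0 : ℝ), {x : X | |a x - L| < ε} ∈ ν

/-- The defining relation of the metric ultraproduct `∫_X A_x dν`: two tuples are
identified iff they are arbitrarily close on sets of the ultrafilter. -/
def MetRel {X : Type*} (ν : Ultrafilter X) (M : X → Type*) [∀ x, MetricSpace (M x)]
    (p q : ∀ x, M x) : Prop :=
  ∀ ε > (0 : ℝ), {x : X | dist (p x) (q x) < ε} ∈ ν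

/-! The ultralimit along `∫_S ν_s dμ` of a family of reals is the `μ`-ultralimit of its
`ν_s`-ultralimits (an `ε/2`-argument in each direction), and bounded families always have
ultralimits. Since both `MetRel` and the metric are given by ultralimits of distances, the two
quotients of `∏_p M_p` are by the same relation and carry the same metric. -/

open Filter Set Topology

section Ultralimit

variable {X : Type*} {ν : Ultrafilter X} {a : X → ℝ} {L L' : ℝ}

lemma isUlim_iff_tendsto : IsUlim ν a L ↔ Tendsto a ν (𝓝 L) := by
  simp only [Metric.tendsto_nhds, Real.dist_eq, eventually_iff, IsUlim,
    Ultrafilter.mem_coe]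

lemma IsUlim.unique (h : IsUlim ν a L) (h' : IsUlim ν a L') : L = L' :=
  tendsto_nhds_unique (isUlim_iff_tendsto.1 h) (isUlim_iff_tendsto.1 h')

lemma exists_isUlim_mem_Icc {b c : ℝ} (h : ∀ x, a x ∈ Icc b c) :
    ∃ L ∈ Icc b c, IsUlim ν a L := by
  obtain ⟨L, hL, hle⟩ := isCompact_Icc.ultrafilter_le_nhds (ν.map a)
    (le_principal_iff.2 (Ultrafilter.mem_map.2 (univ_mem' h)))
  exact ⟨L, hL, isUlim_iff_tendsto.2 hle⟩

lemma isUlim_zero_iff_of_nonneg (ha : ∀ x, 0 ≤ a x) :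
    IsUlim ν a 0 ↔ ∀ ε > (0 : ℝ), {x | a x < ε} ∈ ν := by
  simp only [IsUlim, sub_zero, abs_of_nonneg (ha _)]

lemma metRel_iff_isUlim_dist {M : X → Type*} [∀ x, MetricSpace (M x)] {p q : ∀ x, M x} :
    MetRel ν M p q ↔ IsUlim ν (fun x => dist (p x) (q x)) 0 :=
  (isUlim_zero_iff_of_nonneg fun _ => dist_nonneg).symm

end Ultralimit

section IteratedUltralimit

variable {S X : Type*} {μ : Ultrafilter S} {ν : S → Ultrafilter X} {f : X → ℝ} {L : ℝ}

lemma isUlim_UFint_iff {d : S → ℝ} (hd : ∀ s, IsUlim (ν s) f (d s)) :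
    IsUlim (UFint μ ν) f L ↔ IsUlim μ d L := by
  constructor
  · intro h ε hε
    refine mem_of_superset (mem_UFint.1 (h (ε / 2) (half_pos hε))) fun s hs => ?_
    obtain ⟨x, hxL, hxd⟩ :=
      Ultrafilter.nonempty_of_mem (inter_mem hs (hd s (ε / 2) (half_pos hε)))
    have := abs_sub_le (d s) (f x) L
    rw [abs_sub_comm (d s) (f x)] at this
    simp only [mem_ofPred_eq] at hxL hxd ⊢
    linarith
  · intro h ε hε
    refine mem_UFint.2 (mem_of_superset (h (ε / 2) (half_pos hε)) fun s hs => ?_)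
    refine mem_of_superset (hd s (ε / 2) (half_pos hε)) fun x hx => ?_
    have := abs_sub_le (f x) (d s) L
    simp only [mem_ofPred_eq] at hs hx ⊢
    linarith

variable {b c : ℝ}

lemma isUlim_UFint_iff_exists (hf : ∀ x, f x ∈ Icc b c) :
    IsUlim (UFint μ ν) f L ↔
      ∃ d : S → ℝ, (∀ s, IsUlim (ν s) f (d s)) ∧ IsUlim μ d L := by
  refine ⟨fun h => ?_, fun ⟨d, hd, hL⟩ => (isUlim_UFint_iff hd).2 hL⟩
  choose d _ hd using fun s => exists_isUlim_mem_Icc (ν := ν s) hf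
  exact ⟨d, hd, (isUlim_UFint_iff hd).1 h⟩

lemma isUlim_UFint_zero_iff (hf : ∀ x, f x ∈ Icc 0 c) :
    IsUlim (UFint μ ν) f 0 ↔
      ∀ ε > (0 : ℝ), {s | ∃ L, IsUlim (ν s) f L ∧ L < ε} ∈ μ := by
  choose d hd_nonneg hd using fun s => exists_isUlim_mem_Icc (ν := ν s) hf
  have hset : ∀ ε, {s | ∃ L, IsUlim (ν s) f L ∧ L < ε} = {s | d s < ε} := fun ε => by
    ext s
    exact ⟨fun ⟨L, hL, hLε⟩ => show d s < ε from (hd s).unique hL ▸ hLε, fun h => ⟨d s, hd s, h⟩⟩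
  simp only [hset, isUlim_UFint_iff hd, isUlim_zero_iff_of_nonneg fun s => (hd_nonneg s).1]

end IteratedUltralimit

theorem metric_ultraproduct_pseudoalgebra_general {S : Type*} {T : S → Type*}
    (μ : Ultrafilter S) (ω : ∀ s, Ultrafilter (T s)) (k : ℝ)
    (M : (Σ s, T s) → Type*) [∀ p, MetricSpace (M p)]
    (hbd : ∀ p, ∀ x y : M p, dist x y ≤ k) :
    ∃ a : Quot (MetRel (UFint μ (fun s => (ω s).map (Sigma.mk s))) M) →
        Quot (fun q r : ∀ p, M p =>
          ∀ ε > (0 : ℝ), {s : S | ∃ L : ℝ,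
            IsUlim (ω s) (fun t => dist (q ⟨s, t⟩) (r ⟨s, t⟩)) L ∧ L < ε} ∈ μ),
      (∀ q : ∀ p, M p, a (Quot.mk _ q) = Quot.mk _ q) ∧
      Function.Bijective a ∧
      (∀ (q r : ∀ p, M p) (L : ℝ),
        IsUlim (UFint μ (fun s => (ω s).map (Sigma.mk s)))
          (fun p => dist (q p) (r p)) L ↔
        ∃ dS : S → ℝ,
          (∀ s, IsUlim (ω s) (fun t => dist (q ⟨s, t⟩) (r ⟨s, t⟩)) (dS s)) ∧
          IsUlim μ dS L) := by
  have hdist : ∀ (q r : ∀ p, M p) p, dist (q p) (r p) ∈ Icc 0 k :=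
    fun q r p => ⟨dist_nonneg, hbd p _ _⟩
  let e : Quot (MetRel (UFint μ (fun s => (ω s).map (Sigma.mk s))) M) ≃ Quot _ :=
    Quot.congrRight fun q r =>
      metRel_iff_isUlim_dist.trans (isUlim_UFint_zero_iff (hdist q r))
  exact ⟨e, fun _ => rfl, e.bijective, fun q r _ => isUlim_UFint_iff_exists (hdist q r)⟩

/-- for a family of nonempty complete metric spaces `M_{(s,t)}` of diameter
bounded by `k`, indexed by `∐_{s∈S} T_s`, with `μ` an ultrafilter on `S` and `ω_s`
ultrafilters on `T_s`, the natural map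
`∫_{∐_S T_s} M_{(s,t)} d(∫_S ι_s ω_s dμ) → ∫_S (∫_{T_s} M_{(s,t)} dω_s) dμ`,
sending the class of `(q_{(s,t)})` to the class of the tuple of classes, is a
well-defined isometric bijection.  The iterated ultraproduct on the right is presented
as the quotient of `∏_p M_p` by the relation "the per-`s` ultralimit distances are
`< ε` on a `μ`-large set of `s`, for every `ε > 0`", and the metric on either side is
given by ultralimits of distances (`IsUlim`): the isometry condition says that `L` is
the distance of `[q],[r]` on the left iff it is their distance on the right. -/
theorem metric_ultraproduct_pseudoalgebra {S : Type*} {T : S → Type*}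
    (μ : Ultrafilter S) (ω : ∀ s, Ultrafilter (T s)) (k : ℝ) (hk : 0 < k)
    (M : (Σ s, T s) → Type*) [∀ p, MetricSpace (M p)] [∀ p, CompleteSpace (M p)]
    (hne : ∀ p, Nonempty (M p)) (hbd : ∀ p, ∀ x y : M p, dist x y ≤ k) :
    ∃ a : Quot (MetRel (UFint μ (fun s => (ω s).map (Sigma.mk s))) M) →
        Quot (fun q r : ∀ p, M p =>
          ∀ ε > (0 : ℝ), {s : S | ∃ L : ℝ,
            IsUlim (ω s) (fun t => dist (q ⟨s, t⟩) (r ⟨s, t⟩)) L ∧ L < ε} ∈ μ),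
      (∀ q : ∀ p, M p, a (Quot.mk _ q) = Quot.mk _ q) ∧
      Function.Bijective a ∧
      (∀ (q r : ∀ p, M p) (L : ℝ),
        IsUlim (UFint μ (fun s => (ω s).map (Sigma.mk s)))
          (fun p => dist (q p) (r p)) L ↔
        ∃ dS : S → ℝ,
          (∀ s, IsUlim (ω s) (fun t => dist (q ⟨s, t⟩) (r ⟨s, t⟩)) (dS s)) ∧
          IsUlim μ dS L) :=
  metric_ultraproduct_pseudoalgebra_general μ ω k M hbd
end
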